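/- Let n ≥ 1 be an integer, let e : Fin n → ℕ satisfy e(i) ≥ 2 for all i, let x₀, x₂ ≥ 0 be real numbers, and for each i let y(i) : Fin (e(i) − 1) → ℝ be nonnegative. Set D = x₂ + ∑_i ∑_{j=0}^{e(i)−2} ((j+1)/e(i)) · y(i)(j) and c = min_i (1/e(i)²). Then D² + x₀² ≥ c · (x₀² + x₂² + ∑_i ∑_j y(i)(j)²). -/
import Mathlib


/-- The support-property estimate of Theorem 5.3: with `D` playing the role of the degree
and `x₀` the rank of a sheaf on an orbifold curve with stacky points of orders `e i`,
one has `D² + x₀² ≥ c · (x₀² + x₂² + ∑ y²)`, where `c = min_i 1/(e i)²`. -/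
theorem support_property_estimate (n : ℕ) (hn : 0 < n) (e : Fin n → ℕ)
    (he : ∀ i, 2 ≤ e i) (x₀ x₂ : ℝ) (hx₀ : 0 ≤ x₀) (hx₂ : 0 ≤ x₂)
    (y : ∀ i : Fin n, Fin (e i - 1) → ℝ) (hy : ∀ (i : Fin n) (j : Fin (e i - 1)), 0 ≤ y i j)
    (D : ℝ)
    (hD : D = x₂ + ∑ i : Fin n, ∑ j : Fin (e i - 1),
      (((j : ℕ) + 1 : ℝ) / (e i : ℝ)) * y i j)
    (c : ℝ)
    (hc : c = Finset.univ.inf' (Finset.univ_nonempty_iff.mpr (Fin.pos_iff_nonempty.mp hn))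
      (fun i => 1 / (e i : ℝ) ^ 2)) :
    D ^ 2 + x₀ ^ 2 ≥ c * (x₀ ^ 2 + x₂ ^ 2 + ∑ i : Fin n, ∑ j : Fin (e i - 1), (y i j) ^ 2) := by
  have hepos : ∀ i, (0:ℝ) < e i := fun i => by
    have := he i
    have : (2:ℝ) ≤ e i := by exact_mod_cast this
    linarith
  have ht : ∀ (i : Fin n) (j : Fin (e i - 1)),
      0 ≤ (((j : ℕ) + 1 : ℝ) / (e i : ℝ)) * y i j := fun i j =>
    mul_nonneg (div_nonneg (by positivity) (hepos i).le) (hy i j)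
  have hSi : ∀ i, 0 ≤ ∑ j : Fin (e i - 1), (((j : ℕ) + 1 : ℝ) / (e i : ℝ)) * y i j :=
    fun i => Finset.sum_nonneg fun j _ => ht i j
  set S : ℝ := ∑ i : Fin n, ∑ j : Fin (e i - 1), (((j : ℕ) + 1 : ℝ) / (e i : ℝ)) * y i j with hS
  have hSnn : 0 ≤ S := Finset.sum_nonneg fun i _ => hSi i
  have hcle : ∀ i, c ≤ 1 / (e i : ℝ) ^ 2 := by
    intro i; rw [hc]; exact Finset.inf'_le _ (Finset.mem_univ i)
  have hc1 : c ≤ 1 := by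
    obtain ⟨i⟩ := Fin.pos_iff_nonempty.mp hn
    refine (hcle i).trans ?_
    have h2 : (2:ℝ) ≤ e i := by exact_mod_cast he i
    rw [div_le_one (by positivity)]
    nlinarith
  have hT1 : ∀ i, (∑ j : Fin (e i - 1), ((((j : ℕ) + 1 : ℝ) / (e i : ℝ)) * y i j) ^ 2)
      ≤ (∑ j : Fin (e i - 1), (((j : ℕ) + 1 : ℝ) / (e i : ℝ)) * y i j) ^ 2 :=
    fun i => Finset.sum_sq_le_sq_sum_of_nonneg (fun j _ => ht i j)
  have hT2 : (∑ i : Fin n, (∑ j : Fin (e i - 1), (((j : ℕ) + 1 : ℝ) / (e i : ℝ)) * y i j) ^ 2)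
      ≤ S ^ 2 := by
    rw [hS]; exact Finset.sum_sq_le_sq_sum_of_nonneg (fun i _ => hSi i)
  have hT : (∑ i : Fin n, ∑ j : Fin (e i - 1), ((((j : ℕ) + 1 : ℝ) / (e i : ℝ)) * y i j) ^ 2)
      ≤ S ^ 2 :=
    le_trans (Finset.sum_le_sum fun i _ => hT1 i) hT2
  have hQ : c * (∑ i : Fin n, ∑ j : Fin (e i - 1), (y i j) ^ 2)
      ≤ ∑ i : Fin n, ∑ j : Fin (e i - 1), ((((j : ℕ) + 1 : ℝ) / (e i : ℝ)) * y i j) ^ 2 := by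
    rw [Finset.mul_sum]
    refine Finset.sum_le_sum fun i _ => ?_
    rw [Finset.mul_sum]
    refine Finset.sum_le_sum fun j _ => ?_
    have h1 : c ≤ (((j : ℕ) + 1 : ℝ) / (e i : ℝ)) ^ 2 := by
      refine (hcle i).trans ?_
      rw [div_pow]
      have hj : (1:ℝ) ≤ ((j : ℕ) + 1 : ℝ) ^ 2 := by
        have : (0:ℝ) ≤ (j : ℕ) := Nat.cast_nonneg _
        nlinarith
      exact div_le_div_of_nonneg_right hj (by positivity) |>.trans_eq rfl
    calc c * (y i j) ^ 2 ≤ (((j : ℕ) + 1 : ℝ) / (e i : ℝ)) ^ 2 * (y i j) ^ 2 :=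
        mul_le_mul_of_nonneg_right h1 (sq_nonneg _)
      _ = ((((j : ℕ) + 1 : ℝ) / (e i : ℝ)) * y i j) ^ 2 := (mul_pow _ _ _).symm
  have hD2 : x₂ ^ 2 + S ^ 2 ≤ D ^ 2 := by
    rw [hD]; nlinarith
  nlinarith [hQ, hT, hD2, sq_nonneg x₀, sq_nonneg x₂,
    mul_le_mul_of_nonneg_right hc1 (sq_nonneg x₀),
    mul_le_mul_of_nonneg_right hc1 (sq_nonneg x₂)]
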